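/- Let R be an algebra of type (𝒢, m, n) with m ≥ 2s, where s is the maximal cardinality of a gee. Then R automatically has no exotic products; that is, W_S W_{S'} = 0 for all subgees S, S', and for every i ∈ [n−1] and every subgee S: Vᵢ W_S = (−1)^{ρᵢ(S∖{i})} W_{S∖{i}} if i ∈ S, and Vᵢ W_S = 0 if i ∉ S, where ρᵢ(T) = #{t ∈ T : t > i}. Consequently, when m ≥ 2s the multiplicative structure of R is completely determined by the type conditions. -/

import Mathlib

open scoped TensorProduct

/-- `[k] = {1,…,k}` as a finset of positive integers. -/
def bra (k : ℕ) : Finset ℕ+ := (Finset.range k).image (fun i => ⟨i + 1, i.succ_pos⟩)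

/-- The domination order on finite multisets of positive integers: `MLE S T` holds iff there
is a submultiset `T'` of `T` that can be matched up with `S` so that each element of `S` is
at most its partner in `T'`. -/
def MLE (S T : Multiset ℕ+) : Prop := ∃ T' ≤ T, Multiset.Rel (· ≤ ·) S T'

/-- `S` is a subgee of the collection `𝒢` of gees. -/
def Subgee (𝒢 : Finset (Finset ℕ+)) (S : Finset ℕ+) : Prop := ∃ G ∈ 𝒢, MLE S.val G.val

/-- `rho i T` is the number of elements of `T` greater than `i`. -/
def rho (i : ℕ+) (T : Finset ℕ+) : ℕ := (T.filter (fun t => i < t)).card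

/-- The ordered monomial `V_S = V_{s₁} ⋯ V_{s_k}` for `S = {s₁ < ⋯ < s_k}`. -/
def VSmon {R : Type} [Ring R] (V : ℕ+ → R) (S : Finset ℕ+) : R :=
  ((S.sort (· ≤ ·)).map V).prod

/-- An algebra of type `(𝒢, m, n)`. -/
structure IsPolygonAlgebra (n m : ℕ) (𝒢 : Finset (Finset ℕ+))
    (R : Type) [Ring R] [Algebra ℚ R] [FiniteDimensional ℚ R]
    (𝒜 : ℕ → Submodule ℚ R) [GradedAlgebra 𝒜]
    (V : ℕ+ → R) (W : Finset ℕ+ → R) : Prop where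
  hn : 4 ≤ n
  hm : 1 ≤ m
  gee_nonempty : 𝒢.Nonempty
  gee_sub : ∀ G ∈ 𝒢, G ⊆ bra (n - 1)
  gee_incomp : ∀ G ∈ 𝒢, ∀ G' ∈ 𝒢, MLE G.val G'.val → G = G'
  gee_card : ∀ G ∈ 𝒢, G.card ≤ m - 1
  gcomm : ∀ (i j : ℕ) (x y : R), x ∈ 𝒜 i → y ∈ 𝒜 j →
    x * y = ((-1 : ℚ)) ^ (i * j) • (y * x)
  V_mem : ∀ i : ℕ+, (i : ℕ) ≤ n - 1 → V i ∈ 𝒜 1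
  W_mem : ∀ S : Finset ℕ+, Subgee 𝒢 S → W S ∈ 𝒜 (m - S.card)
  VS_ne : ∀ S : Finset ℕ+, S ⊆ bra (n - 1) → (VSmon V S ≠ 0 ↔ Subgee 𝒢 S)
  basis_indep : LinearIndependent ℚ
    (Sum.elim (fun S : {S : Finset ℕ+ // Subgee 𝒢 S} => VSmon V S.1)
      (fun S : {S : Finset ℕ+ // Subgee 𝒢 S} => W S.1))
  basis_span : Submodule.span ℚ (Set.range
    (Sum.elim (fun S : {S : Finset ℕ+ // Subgee 𝒢 S} => VSmon V S.1)
      (fun S : {S : Finset ℕ+ // Subgee 𝒢 S} => W S.1))) = ⊤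
  VW : ∀ S S' : Finset ℕ+, Subgee 𝒢 S → Subgee 𝒢 S' → S.card = S'.card →
    VSmon V S * W S' = if S = S' then W ∅ else 0
  WW : ∀ S S' : Finset ℕ+, Subgee 𝒢 S → Subgee 𝒢 S' → S.card + S'.card = m →
    W S * W S' = 0

/-- `R` has no exotic products. -/
def NoExoticProducts (n : ℕ) (𝒢 : Finset (Finset ℕ+))
    {R : Type} [Ring R] [Algebra ℚ R] (V : ℕ+ → R) (W : Finset ℕ+ → R) : Prop :=
  (∀ S S' : Finset ℕ+, Subgee 𝒢 S → Subgee 𝒢 S' → W S * W S' = 0) ∧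
  (∀ i : ℕ+, (i : ℕ) ≤ n - 1 → ∀ S : Finset ℕ+, Subgee 𝒢 S →
    (i ∈ S → V i * W S = ((-1 : ℚ)) ^ (rho i (S.erase i)) • W (S.erase i)) ∧
    (i ∉ S → V i * W S = 0))

section Tensor

variable {R : Type} [Ring R] [Algebra ℚ R] (𝒜 : ℕ → Submodule ℚ R) [GradedAlgebra 𝒜]

/-- The multiplication map `μ : R ⊗̂ R → R`. -/
noncomputable def muMap : (𝒜 ᵍ⊗[ℚ] 𝒜) →ₗ[ℚ] R :=
  (LinearMap.mul' ℚ R).comp (GradedTensorProduct.of ℚ 𝒜 𝒜).symm.toLinearMap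

/-- `x ⊗ y` as an element of the graded tensor product `R ⊗̂ R`. -/
noncomputable def tm (x y : R) : 𝒜 ᵍ⊗[ℚ] 𝒜 := GradedTensorProduct.of ℚ 𝒜 𝒜 (x ⊗ₜ y)

/-- `ū = u ⊗ 1 - 1 ⊗ u`. -/
noncomputable def ubar (u : R) : 𝒜 ᵍ⊗[ℚ] 𝒜 := tm 𝒜 u 1 - tm 𝒜 1 u

/-- `V̄_D = ∏_{i ∈ D} V̄ᵢ` with factors in increasing order of `i`. -/
noncomputable def Vbar (V : ℕ+ → R) (D : Finset ℕ+) : 𝒜 ᵍ⊗[ℚ] 𝒜 :=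
  ((D.sort (· ≤ ·)).map (fun i => ubar 𝒜 (V i))).prod

/-- The set of `k` such that some product of `k` zero divisors in `R ⊗̂ R` is nonzero;
`zcl R` is the greatest element of this set. -/
def zclSet : Set ℕ :=
  {k : ℕ | ∃ L : List (𝒜 ᵍ⊗[ℚ] 𝒜), L.length = k ∧
    (∀ x ∈ L, muMap 𝒜 x = 0) ∧ L.prod ≠ 0}

end Tensor

/-! In degrees `d > s` the only basis elements are the `W_T` with `m - |T| = d`, and the pairing
`V_T W_{T'} = δ_{T,T'} W_∅` reads off their coefficients; so a homogeneous element `x` of such a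
degree vanishes as soon as `V_T x = 0` for all subgees `T` with `m - |T| = d`. When `m ≥ 2s`, a
product `W_S W_{S'}` with `|S| + |S'| ≠ m` has degree `> m`, where there is nothing at all, and
`V_i W_S` has degree `m - |S| + 1 > s`. Reordering `V_T V_i = ± V_{T ∪ {i}}` by graded
commutativity gives `V_T V_i W_S = ± δ_{T ∪ {i}, S} W_∅`, which is exactly the pairing of `V_T`
with the claimed value of `V_i W_S`. -/

lemma mem_bra {k : ℕ} {a : ℕ+} : a ∈ bra k ↔ (a : ℕ) ≤ k := by
  rw [bra]
  erw [Finset.mem_image]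
  simp only [Finset.mem_range]
  constructor
  · rintro ⟨i, hi, rfl⟩
    exact hi
  · intro hk
    have ha := a.pos
    exact ⟨(a : ℕ) - 1, by omega, PNat.eq (Nat.sub_add_cancel ha)⟩

lemma MLE.mono_left {S T U : Multiset ℕ+} (hSU : MLE S U) (hTS : T ≤ S) : MLE T U := by
  obtain ⟨U', hU', hrel⟩ := hSU
  obtain ⟨D, rfl⟩ := Multiset.le_iff_exists_add.mp hTS
  obtain ⟨U₀, U₁, h₀, -, rfl⟩ := Multiset.rel_add_left.mp hrel
  exact ⟨U₀, le_trans (Multiset.le_add_right _ _) hU', h₀⟩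

section Subgee

variable {𝒢 : Finset (Finset ℕ+)} {S T : Finset ℕ+}

lemma Subgee.mono (hS : Subgee 𝒢 S) (hTS : T ⊆ S) : Subgee 𝒢 T := by
  obtain ⟨G, hG, hSG⟩ := hS
  exact ⟨G, hG, MLE.mono_left hSG (Finset.val_le_iff.mpr hTS)⟩

lemma Subgee.card_le_sup (hS : Subgee 𝒢 S) : S.card ≤ 𝒢.sup Finset.card := by
  obtain ⟨G, hG, U', hU', hrel⟩ := hS
  calc S.card = Multiset.card U' := Multiset.card_eq_card_of_rel hrel
    _ ≤ G.card := Multiset.card_le_card hU'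
    _ ≤ 𝒢.sup Finset.card := Finset.le_sup hG

lemma Subgee.subset_bra {k : ℕ} (hsub : ∀ G ∈ 𝒢, G ⊆ bra k) (hS : Subgee 𝒢 S) :
    S ⊆ bra k := by
  intro x hx
  obtain ⟨G, hG, U', hU', hrel⟩ := hS.mono (Finset.singleton_subset_iff.mpr hx)
  obtain ⟨b, bs, hxb, -, rfl⟩ :=
    Multiset.rel_cons_left.mp (show Multiset.Rel (· ≤ ·) (x ::ₘ 0) U' from hrel)
  have hbG : b ∈ G := Multiset.mem_of_le hU' (Multiset.mem_cons_self _ _)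
  exact mem_bra.mpr ((PNat.coe_le_coe x b).mpr hxb |>.trans (mem_bra.mp (hsub G hG hbG)))

lemma subgee_empty_of_nonempty (hne : 𝒢.Nonempty) : Subgee 𝒢 ∅ := by
  obtain ⟨G, hG⟩ := hne
  exact ⟨G, hG, 0, zero_le, Multiset.rel_zero_left.mpr rfl⟩

end Subgee

section GradedComm

variable {R : Type} [Ring R] {V : ℕ+ → R} {S : Finset ℕ+} {i : ℕ+}

lemma VSmon_insert_of_forall_lt (hlt : ∀ x ∈ S, i < x) (hi : i ∉ S) :
    VSmon V (insert i S) = V i * VSmon V S := by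
  rw [VSmon, Finset.sort_insert _ (fun x hx => (hlt x hx).le) hi, List.map_cons, List.prod_cons,
    VSmon]

variable [Algebra ℚ R] {𝒜 : ℕ → Submodule ℚ R}

def IsGradedComm (𝒜 : ℕ → Submodule ℚ R) : Prop :=
  ∀ (i j : ℕ) (x y : R), x ∈ 𝒜 i → y ∈ 𝒜 j → x * y = ((-1 : ℚ)) ^ (i * j) • (y * x)

lemma IsGradedComm.mul_self_eq_zero (hcomm : IsGradedComm 𝒜) {x : R} (hx : x ∈ 𝒜 1) :
    x * x = 0 := by
  have hneg : x * x = -(x * x) := by simpa using hcomm 1 1 x x hx hx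
  have h2 : (2 : ℚ) • (x * x) = 0 := by
    rw [two_smul]
    nth_rewrite 2 [hneg]
    exact add_neg_cancel _
  exact (smul_eq_zero.mp h2).resolve_left two_ne_zero

variable [GradedAlgebra 𝒜]

lemma VSmon_mem (hV : ∀ j ∈ S, V j ∈ 𝒜 1) : VSmon V S ∈ 𝒜 S.card := by
  have := SetLike.list_prod_map_mem_graded (S.sort (· ≤ ·)) (fun _ => 1) V
    fun j hj => hV j ((Finset.mem_sort _).mp hj)
  simpa [VSmon, Finset.length_sort] using this

lemma IsGradedComm.VSmon_mul_of_mem (hcomm : IsGradedComm 𝒜) (hV : ∀ j ∈ S, V j ∈ 𝒜 1)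
    (hi : i ∈ S) : VSmon V S * V i = 0 := by
  induction S using Finset.induction_on_min with
  | empty => simp at hi
  | insert a S hlt ih =>
    have haS : a ∉ S := fun h => lt_irrefl a (hlt a h)
    have hV' : ∀ j ∈ S, V j ∈ 𝒜 1 := fun j hj => hV j (Finset.mem_insert_of_mem hj)
    have hVa : V a ∈ 𝒜 1 := hV a (Finset.mem_insert_self a S)
    rw [VSmon_insert_of_forall_lt hlt haS, mul_assoc]
    rcases Finset.mem_insert.mp hi with rfl | hiS
    · rw [hcomm _ _ _ _ (VSmon_mem hV') hVa, mul_smul_comm, ← mul_assoc,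
        hcomm.mul_self_eq_zero hVa, zero_mul, smul_zero]
    · rw [ih hV' hiS, mul_zero]

lemma IsGradedComm.VSmon_mul_of_notMem (hcomm : IsGradedComm 𝒜)
    (hV : ∀ j ∈ insert i S, V j ∈ 𝒜 1) (hi : i ∉ S) :
    VSmon V S * V i = ((-1 : ℚ)) ^ (rho i S) • VSmon V (insert i S) := by
  induction S using Finset.induction_on_min with
  | empty => simp [VSmon, rho]
  | insert a S hlt ih =>
    have haS : a ∉ S := fun h => lt_irrefl a (hlt a h)
    have hia : i ≠ a := fun h => hi (h ▸ Finset.mem_insert_self a S)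
    have hiS : i ∉ S := fun h => hi (Finset.mem_insert_of_mem h)
    rcases hia.lt_or_gt with hlt_i | hgt_i
    · have hlt' : ∀ x ∈ insert a S, i < x := by
        intro x hx
        rcases Finset.mem_insert.mp hx with rfl | hx
        · exact hlt_i
        · exact hlt_i.trans (hlt x hx)
      have hrho : rho i (insert a S) = (insert a S).card := by
        rw [rho, Finset.filter_true_of_mem hlt']
      rw [hcomm _ _ _ _ (VSmon_mem fun j hj => hV j (Finset.mem_insert_of_mem hj))
          (hV i (Finset.mem_insert_self i _)), mul_one, hrho,
        VSmon_insert_of_forall_lt hlt' hi]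
    · have hlt' : ∀ x ∈ insert i S, a < x := by
        intro x hx
        rcases Finset.mem_insert.mp hx with rfl | hx
        · exact hgt_i
        · exact hlt x hx
      have hrho : rho i (insert a S) = rho i S := by
        rw [rho, Finset.filter_insert, if_neg (not_lt.mpr hgt_i.le), rho]
      have hV' : ∀ j ∈ insert i S, V j ∈ 𝒜 1 := fun j hj =>
        hV j (Finset.insert_subset_insert i (Finset.subset_insert a S) hj)
      rw [VSmon_insert_of_forall_lt hlt haS, mul_assoc, ih hV' hiS, mul_smul_comm, hrho,
        Finset.insert_comm, VSmon_insert_of_forall_lt hlt' (by simp [hia.symm, haS])]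

end GradedComm

namespace IsPolygonAlgebra

variable {n m : ℕ} {𝒢 : Finset (Finset ℕ+)} {R : Type} [Ring R] [Algebra ℚ R]
  [FiniteDimensional ℚ R] {𝒜 : ℕ → Submodule ℚ R} [GradedAlgebra 𝒜]
  {V : ℕ+ → R} {W : Finset ℕ+ → R}

variable (h : IsPolygonAlgebra n m 𝒢 R 𝒜 V W)
include h

lemma isGradedComm : IsGradedComm 𝒜 :=
  h.gcomm

lemma sup_card_le : 𝒢.sup Finset.card ≤ m - 1 :=
  Finset.sup_le h.gee_card

lemma V_mem_of_subgee {S : Finset ℕ+} (hS : Subgee 𝒢 S) : ∀ j ∈ S, V j ∈ 𝒜 1 :=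
  fun j hj => h.V_mem j (mem_bra.mp (hS.subset_bra h.gee_sub hj))

lemma W_empty_ne_zero : W ∅ ≠ 0 := by
  simpa using h.basis_indep.ne_zero (Sum.inr ⟨∅, subgee_empty_of_nonempty h.gee_nonempty⟩)

lemma mem_span_W_of_mem {d : ℕ} (hd : 𝒢.sup Finset.card < d) {x : R} (hx : x ∈ 𝒜 d) :
    x ∈ Submodule.span ℚ (W '' {T | Subgee 𝒢 T ∧ m - T.card = d}) := by
  have hproj : GradedAlgebra.proj 𝒜 d x = x := by
    rw [GradedAlgebra.proj_apply, DirectSum.decompose_of_mem_same 𝒜 hx]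
  have hmap : x ∈ (⊤ : Submodule ℚ R).map (GradedAlgebra.proj 𝒜 d) := ⟨x, trivial, hproj⟩
  rw [← h.basis_span, Submodule.map_span] at hmap
  refine Submodule.span_le.mpr ?_ hmap
  rintro _ ⟨_, ⟨⟨T, hT⟩ | ⟨T, hT⟩, rfl⟩, rfl⟩
  · have hne : T.card ≠ d := (hT.card_le_sup.trans_lt hd).ne
    rw [Sum.elim_inl, GradedAlgebra.proj_apply,
      DirectSum.decompose_of_mem_ne 𝒜 (VSmon_mem (h.V_mem_of_subgee hT)) hne]
    exact zero_mem _
  · rw [Sum.elim_inr, GradedAlgebra.proj_apply]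
    by_cases hTd : m - T.card = d
    · rw [DirectSum.decompose_of_mem_same 𝒜 (hTd ▸ h.W_mem T hT)]
      exact Submodule.subset_span ⟨T, ⟨hT, hTd⟩, rfl⟩
    · rw [DirectSum.decompose_of_mem_ne 𝒜 (h.W_mem T hT) hTd]
      exact zero_mem _

lemma eq_zero_of_mem_span_W {d : ℕ} {x : R}
    (hx : x ∈ Submodule.span ℚ (W '' {T | Subgee 𝒢 T ∧ m - T.card = d}))
    (hpair : ∀ T, Subgee 𝒢 T → m - T.card = d → VSmon V T * x = 0) : x = 0 := by
  obtain ⟨l, hl, rfl⟩ := Finsupp.mem_span_image_iff_linearCombination ℚ |>.mp hx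
  suffices l = 0 by rw [this, map_zero]
  ext T
  by_contra hne
  obtain ⟨hT, hTd⟩ : Subgee 𝒢 T ∧ m - T.card = d := hl (Finsupp.mem_support_iff.mpr hne)
  have hterm : ∀ T' ∈ l.support, VSmon V T * (l T' • W T') = if T = T' then l T' • W ∅ else 0 := by
    intro T' hT'
    obtain ⟨hT'g, hT'd⟩ : Subgee 𝒢 T' ∧ m - T'.card = d := hl hT'
    have hcard : T.card = T'.card := by
      have := hT.card_le_sup; have := hT'g.card_le_sup; have := h.sup_card_le; omega
    rw [mul_smul_comm, h.VW T T' hT hT'g hcard]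
    split_ifs <;> simp
  have hpairT := hpair T hT hTd
  rw [Finsupp.linearCombination_apply, Finsupp.sum, Finset.mul_sum, Finset.sum_congr rfl hterm,
    Finset.sum_ite_eq, if_pos (Finsupp.mem_support_iff.mpr hne)] at hpairT
  exact hne ((smul_eq_zero.mp hpairT).resolve_right h.W_empty_ne_zero)

lemma eq_zero_of_forall_VSmon_mul_eq_zero {d : ℕ} (hd : 𝒢.sup Finset.card < d) {x : R}
    (hx : x ∈ 𝒜 d) (hpair : ∀ T, Subgee 𝒢 T → m - T.card = d → VSmon V T * x = 0) :
    x = 0 :=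
  h.eq_zero_of_mem_span_W (h.mem_span_W_of_mem hd hx) hpair

lemma VSmon_mul_V_mul_W {i : ℕ+} (hi : (i : ℕ) ≤ n - 1) {S T : Finset ℕ+} (hS : Subgee 𝒢 S)
    (hT : Subgee 𝒢 T) (hcard : T.card + 1 = S.card) :
    VSmon V T * (V i * W S) = if insert i T = S then ((-1 : ℚ)) ^ rho i T • W ∅ else 0 := by
  have hV : ∀ j ∈ insert i T, V j ∈ 𝒜 1 :=
    Finset.forall_mem_insert _ _ _ |>.mpr ⟨h.V_mem i hi, h.V_mem_of_subgee hT⟩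
  rw [← mul_assoc]
  by_cases hiT : i ∈ T
  · have hne : insert i T ≠ S := fun heq => by
      rw [Finset.insert_eq_of_mem hiT] at heq
      rw [heq] at hcard
      omega
    rw [h.isGradedComm.VSmon_mul_of_mem (h.V_mem_of_subgee hT) hiT, zero_mul, if_neg hne]
  rw [h.isGradedComm.VSmon_mul_of_notMem hV hiT, smul_mul_assoc]
  by_cases hsub : Subgee 𝒢 (insert i T)
  · rw [h.VW _ _ hsub hS (by rw [Finset.card_insert_of_notMem hiT]; omega)]
    split_ifs <;> simp
  · have hzero : VSmon V (insert i T) = 0 := by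
      by_contra hne
      exact hsub ((h.VS_ne _ (Finset.insert_subset (mem_bra.mpr hi)
        (hT.subset_bra h.gee_sub))).mp hne)
    rw [hzero, zero_mul, smul_zero, if_neg (by rintro rfl; exact hsub hS)]

variable (hm2s : 2 * 𝒢.sup Finset.card ≤ m)
include hm2s

lemma W_mul_W {S S' : Finset ℕ+} (hS : Subgee 𝒢 S) (hS' : Subgee 𝒢 S') : W S * W S' = 0 := by
  have hcS := hS.card_le_sup
  have hcS' := hS'.card_le_sup
  by_cases hsum : S.card + S'.card = m
  · exact h.WW S S' hS hS' hsum
  · refine h.eq_zero_of_forall_VSmon_mul_eq_zero (d := (m - S.card) + (m - S'.card)) (by omega)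
      (SetLike.mul_mem_graded (h.W_mem S hS) (h.W_mem S' hS')) fun T _ hTd => ?_
    omega

lemma V_mul_W_of_mem {i : ℕ+} (hi : (i : ℕ) ≤ n - 1) {S : Finset ℕ+} (hS : Subgee 𝒢 S)
    (hiS : i ∈ S) : V i * W S = ((-1 : ℚ)) ^ (rho i (S.erase i)) • W (S.erase i) := by
  have hcS := hS.card_le_sup
  have hS1 : 1 ≤ S.card := Finset.card_pos.mpr ⟨i, hiS⟩
  have hSe : Subgee 𝒢 (S.erase i) := hS.mono (Finset.erase_subset i S)
  have hcard_erase : (S.erase i).card + 1 = S.card := Finset.card_erase_add_one hiS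
  have hdeg : m - (S.erase i).card = 1 + (m - S.card) := by omega
  rw [← sub_eq_zero]
  refine h.eq_zero_of_forall_VSmon_mul_eq_zero (d := 1 + (m - S.card)) (by omega)
    (sub_mem (SetLike.mul_mem_graded (h.V_mem i hi) (h.W_mem S hS))
      (Submodule.smul_mem _ _ (hdeg ▸ h.W_mem _ hSe))) fun T hT hTd => ?_
  have hcard : T.card + 1 = S.card := by
    have := hT.card_le_sup; omega
  have hinsert_iff : insert i T = S ↔ T = S.erase i := by
    constructor
    · rintro rfl
      have hiT : i ∉ T := fun hiT => by rw [Finset.insert_eq_of_mem hiT] at hcard; omega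
      exact (Finset.erase_insert hiT).symm
    · rintro rfl
      exact Finset.insert_erase hiS
  rw [mul_sub, h.VSmon_mul_V_mul_W hi hS hT hcard, mul_smul_comm,
    h.VW T _ hT hSe (by omega), sub_eq_zero]
  by_cases hTS : T = S.erase i
  · rw [if_pos (hinsert_iff.mpr hTS), if_pos hTS, hTS]
  · rw [if_neg (hinsert_iff.not.mpr hTS), if_neg hTS, smul_zero]

lemma V_mul_W_of_notMem {i : ℕ+} (hi : (i : ℕ) ≤ n - 1) {S : Finset ℕ+} (hS : Subgee 𝒢 S)
    (hiS : i ∉ S) : V i * W S = 0 := by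
  have hcS := hS.card_le_sup
  refine h.eq_zero_of_forall_VSmon_mul_eq_zero (d := 1 + (m - S.card)) (by omega)
    (SetLike.mul_mem_graded (h.V_mem i hi) (h.W_mem S hS)) fun T hT hTd => ?_
  have hcard : T.card + 1 = S.card := by
    have := hT.card_le_sup; have := h.sup_card_le; omega
  rw [h.VSmon_mul_V_mul_W hi hS hT hcard,
    if_neg fun (heq : insert i T = S) => hiS (heq ▸ Finset.mem_insert_self i T)]

end IsPolygonAlgebra

/-- If `m ≥ 2s`, where `s` is the maximal cardinality of a gee, then an algebra of type
`(𝒢, m, n)` automatically has no exotic products: `W_S W_{S'} = 0` for all subgees `S, S'`,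
and `Vᵢ W_S = (−1)^{ρᵢ(S∖{i})} W_{S∖{i}}` if `i ∈ S`, `Vᵢ W_S = 0` if `i ∉ S`. -/
theorem stmt_15 (n m : ℕ) (𝒢 : Finset (Finset ℕ+))
    (R : Type) [Ring R] [Algebra ℚ R] [FiniteDimensional ℚ R]
    (𝒜 : ℕ → Submodule ℚ R) [GradedAlgebra 𝒜] (V : ℕ+ → R) (W : Finset ℕ+ → R)
    (h : IsPolygonAlgebra n m 𝒢 R 𝒜 V W)
    (hm2s : 2 * 𝒢.sup Finset.card ≤ m) :
    NoExoticProducts n 𝒢 V W :=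
  ⟨fun _ _ hS hS' => h.W_mul_W hm2s hS hS',
    fun _ hi _ hS => ⟨h.V_mul_W_of_mem hm2s hi hS, h.V_mul_W_of_notMem hm2s hi hS⟩⟩
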